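/- Let ν : ℝ³ → ℝ be a measurable function satisfying ν₀(1+|v|) ≤ ν(v) ≤ ν₁(1+|v|) for constants ν₀, ν₁ > 0, and let M(v) = (2π)^{−3/2} e^{−|v|²/2}. For j ∈ {−1, 1}, ε ∈ (0,1) and s > 0, define R(ε, s, j) = (ε/2) ∫_{ℝ³} [ν(v) v₂² M(v)] / [ν(v)² + ε²s²(v₁ + j)²] dv. Then there exist constants C₁, C₂ > 0, depending only on ν₀ and ν₁, such that whenever εs ≥ 2: C₁/s ≤ R(ε, s, j) ≤ C₂/s. -/

import Mathlib

/-!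
Write `a = εs`, so that `R = (ε/2) ∫ G` with `G v = ν v₂² M / (ν² + a²(v₁ + j)²)`, and `ε/a = 1/s`.
Upper bound: in the denominator `ν ≥ ν₀`, and in the numerator `(1 + |v|)|v|² e^{-|v|²/2}` is at
most `8 e^{-|v|²/4}`, so `G` is dominated by a Lorentzian `(ν₀² + a²(v₁ + j)²)⁻¹`, of integral
`π/(aν₀)`, times two Gaussians in `v₂, v₃`.
Lower bound: on the box `(-j, -j + 1/a] × (1, 2] × (0, 1]`, of volume `1/a`, all of `ν`, `v₂²`, `M`
and `a(v₁ + j)` are bounded above and below by constants depending only on `ν₀, ν₁`.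
-/

noncomputable section

open MeasureTheory

/-- The normalized global Maxwellian `M(v) = (2π)^{−3/2} e^{−|v|²/2}` on `ℝ³`. -/
def Mx (v : EuclideanSpace ℝ (Fin 3)) : ℝ :=
  (2 * Real.pi) ^ (-(3:ℝ)/2) * Real.exp (-‖v‖^2 / 2)

/-- The quantity `R(ε, s, j) = (ε/2) ∫ ν v₂² M / (ν² + ε²s²(v₁+j)²) dv`. -/
def Rquant (ν : EuclideanSpace ℝ (Fin 3) → ℝ) (ε s j : ℝ) : ℝ :=
  (ε/2) * ∫ v : EuclideanSpace ℝ (Fin 3),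
    (ν v * (v 1)^2 * Mx v) / ((ν v)^2 + ε^2 * s^2 * (v 0 + j)^2)

open Real

namespace EuclideanSpace

variable {ι : Type*} [Fintype ι]

theorem norm_sq_fin_three (v : EuclideanSpace ℝ (Fin 3)) :
    ‖v‖ ^ 2 = v 0 ^ 2 + v 1 ^ 2 + v 2 ^ 2 := by
  rw [real_norm_sq_eq, Fin.sum_univ_three]

theorem volume_setOf_forall_mem (S : ι → Set ℝ) :
    volume {v : EuclideanSpace ℝ ι | ∀ i, v i ∈ S i} = ∏ i, volume (S i) := by
  rw [← volume_pi_pi, ← (volume_preserving_symm_measurableEquiv_toLp ι).measure_preimage_equiv]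
  congr 1
  ext v
  simp

theorem integrable_prod_apply {f : ι → ℝ → ℝ} (hf : ∀ i, Integrable (f i)) :
    Integrable fun v : EuclideanSpace ℝ ι => ∏ i, f i (v i) :=
  ((PiLp.volume_preserving_ofLp ι).integrable_comp_emb
    (MeasurableEquiv.toLp 2 (ι → ℝ)).symm.measurableEmbedding).mpr (.fintype_prod hf)

theorem integral_prod_apply (f : ι → ℝ → ℝ) :
    ∫ v : EuclideanSpace ℝ ι, ∏ i, f i (v i) = ∏ i, ∫ x, f i x :=
  ((PiLp.volume_preserving_ofLp ι).integral_comp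
    (MeasurableEquiv.toLp 2 (ι → ℝ)).symm.measurableEmbedding fun x => ∏ i, f i (x i)).trans
    (integral_fintype_prod_volume_eq_prod f)

end EuclideanSpace

theorem inv_sq_add_sq_mul_sq_eq (a : ℝ) {b : ℝ} (hb : b ≠ 0) (x : ℝ) :
    (b ^ 2 + a ^ 2 * x ^ 2)⁻¹ = (b ^ 2)⁻¹ * (1 + (a / b * x) ^ 2)⁻¹ := by
  rw [← mul_inv]
  field_simp

theorem integrable_inv_sq_add_sq_mul_sq {a b : ℝ} (ha : 0 < a) (hb : 0 < b) :
    Integrable fun x : ℝ => (b ^ 2 + a ^ 2 * x ^ 2)⁻¹ := by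
  simp_rw [inv_sq_add_sq_mul_sq_eq a hb.ne']
  exact (integrable_inv_one_add_sq.comp_mul_left' (by positivity)).const_mul _

theorem integral_inv_sq_add_sq_mul_sq {a b : ℝ} (ha : 0 < a) (hb : 0 < b) :
    ∫ x : ℝ, (b ^ 2 + a ^ 2 * x ^ 2)⁻¹ = π / (a * b) := by
  simp_rw [inv_sq_add_sq_mul_sq_eq a hb.ne']
  rw [integral_const_mul, Measure.integral_comp_mul_left (fun y => (1 + y ^ 2)⁻¹),
    integral_univ_inv_one_add_sq, smul_eq_mul, abs_of_pos (by positivity)]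
  field_simp

theorem one_add_mul_sq_le_exp (t : ℝ) : (1 + t) * t ^ 2 ≤ 8 * exp (t ^ 2 / 4) := by
  nlinarith [quadratic_le_exp_of_nonneg (by positivity : 0 ≤ t ^ 2 / 4), sq_nonneg (t ^ 2 / 2 - t)]

def rIntegrand (ν : EuclideanSpace ℝ (Fin 3) → ℝ) (a j : ℝ) (v : EuclideanSpace ℝ (Fin 3)) : ℝ :=
  ν v * v 1 ^ 2 * Mx v / (ν v ^ 2 + a ^ 2 * (v 0 + j) ^ 2)

theorem Rquant_eq_integral_rIntegrand (ν : EuclideanSpace ℝ (Fin 3) → ℝ) (ε s j : ℝ) :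
    Rquant ν ε s j = ε / 2 * ∫ v, rIntegrand ν (ε * s) j v := by
  simp only [Rquant, rIntegrand, mul_pow]

def rMajorantFactor (ν₀ a j : ℝ) : Fin 3 → ℝ → ℝ :=
  ![fun x => (ν₀ ^ 2 + a ^ 2 * (x + j) ^ 2)⁻¹, fun x => exp (-(1 / 4) * x ^ 2),
    fun x => exp (-(1 / 4) * x ^ 2)]

theorem integrable_rMajorantFactor {ν₀ a : ℝ} (hν₀ : 0 < ν₀) (ha : 0 < a) (j : ℝ) (i : Fin 3) :
    Integrable (rMajorantFactor ν₀ a j i) := by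
  fin_cases i
  · exact (integrable_inv_sq_add_sq_mul_sq ha hν₀).comp_add_right j
  all_goals exact integrable_exp_neg_mul_sq (by norm_num)

theorem integral_rMajorant {ν₀ a : ℝ} (hν₀ : 0 < ν₀) (ha : 0 < a) (j : ℝ) :
    ∫ v : EuclideanSpace ℝ (Fin 3), ∏ i, rMajorantFactor ν₀ a j i (v i) =
      4 * π ^ 2 / (a * ν₀) := by
  rw [EuclideanSpace.integral_prod_apply, Fin.prod_univ_three]
  simp only [rMajorantFactor, Matrix.cons_val_zero, Matrix.cons_val_one, Matrix.cons_val_two,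
    Matrix.head_cons, Matrix.tail_cons]
  rw [integral_add_right_eq_self (fun x => (ν₀ ^ 2 + a ^ 2 * x ^ 2)⁻¹) j,
    integral_inv_sq_add_sq_mul_sq ha hν₀, integral_gaussian, mul_assoc,
    mul_self_sqrt (by positivity)]
  field_simp

section Bounds

variable {ν : EuclideanSpace ℝ (Fin 3) → ℝ} {ν₀ ν₁ : ℝ}

theorem rIntegrand_nonneg (hν : ∀ v, 0 ≤ ν v) (a j : ℝ) (v : EuclideanSpace ℝ (Fin 3)) :
    0 ≤ rIntegrand ν a j v := by
  have := hν v
  unfold rIntegrand Mx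
  positivity

theorem rIntegrand_le_majorant
    (hν : ∀ v, ν₀ * (1 + ‖v‖) ≤ ν v ∧ ν v ≤ ν₁ * (1 + ‖v‖)) (hν₀ : 0 < ν₀)
    (a j : ℝ) (v : EuclideanSpace ℝ (Fin 3)) :
    rIntegrand ν a j v ≤
      8 * ν₁ * (2 * π) ^ (-(3:ℝ)/2) * ∏ i, rMajorantFactor ν₀ a j i (v i) := by
  obtain ⟨hlow, hup⟩ := hν v
  have hnorm := EuclideanSpace.norm_sq_fin_three v
  have hν₀_le : ν₀ ≤ ν v := by nlinarith [norm_nonneg v]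
  have hν₁ : 0 ≤ ν₁ := by nlinarith [norm_nonneg v]
  have hweight : ν v * v 1 ^ 2 ≤ 8 * ν₁ * exp (‖v‖ ^ 2 / 4) := by
    calc ν v * v 1 ^ 2 ≤ ν₁ * ((1 + ‖v‖) * ‖v‖ ^ 2) := by
          nlinarith [mul_le_mul_of_nonneg_right hup (sq_nonneg (v 1)), sq_nonneg (v 0),
            sq_nonneg (v 2), mul_nonneg hν₁ (norm_nonneg v)]
      _ ≤ ν₁ * (8 * exp (‖v‖ ^ 2 / 4)) :=
          mul_le_mul_of_nonneg_left (one_add_mul_sq_le_exp _) hν₁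
      _ = 8 * ν₁ * exp (‖v‖ ^ 2 / 4) := by ring
  have hgauss : exp (‖v‖ ^ 2 / 4) * exp (-‖v‖ ^ 2 / 2) ≤
      exp (-(1 / 4) * v 1 ^ 2) * exp (-(1 / 4) * v 2 ^ 2) := by
    rw [← exp_add, ← exp_add, hnorm]
    exact exp_le_exp.mpr (by nlinarith [sq_nonneg (v 0)])
  have hnum : ν v * v 1 ^ 2 * Mx v ≤ 8 * ν₁ * (2 * π) ^ (-(3:ℝ)/2) *
      (exp (-(1 / 4) * v 1 ^ 2) * exp (-(1 / 4) * v 2 ^ 2)) := by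
    unfold Mx
    calc ν v * v 1 ^ 2 * ((2 * π) ^ (-(3:ℝ)/2) * exp (-‖v‖ ^ 2 / 2))
        ≤ 8 * ν₁ * exp (‖v‖ ^ 2 / 4) * ((2 * π) ^ (-(3:ℝ)/2) * exp (-‖v‖ ^ 2 / 2)) := by
          gcongr
      _ = 8 * ν₁ * (2 * π) ^ (-(3:ℝ)/2) * (exp (‖v‖ ^ 2 / 4) * exp (-‖v‖ ^ 2 / 2)) := by ring
      _ ≤ _ := by gcongr
  calc rIntegrand ν a j v
      ≤ 8 * ν₁ * (2 * π) ^ (-(3:ℝ)/2) * (exp (-(1 / 4) * v 1 ^ 2) * exp (-(1 / 4) * v 2 ^ 2)) /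
          (ν₀ ^ 2 + a ^ 2 * (v 0 + j) ^ 2) := by
        unfold rIntegrand
        gcongr
    _ = _ := by
        simp only [rMajorantFactor, Fin.prod_univ_three, Matrix.cons_val_zero,
          Matrix.cons_val_one, Matrix.cons_val_two, Matrix.head_cons, Matrix.tail_cons]
        ring

theorem integrable_rIntegrand (hmeas : Measurable ν)
    (hν : ∀ v, ν₀ * (1 + ‖v‖) ≤ ν v ∧ ν v ≤ ν₁ * (1 + ‖v‖)) (hν₀ : 0 < ν₀)
    {a : ℝ} (ha : 0 < a) (j : ℝ) :
    Integrable (rIntegrand ν a j) := by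
  have hν_nonneg (v : EuclideanSpace ℝ (Fin 3)) : 0 ≤ ν v := by
    nlinarith [(hν v).1, norm_nonneg v]
  refine ((EuclideanSpace.integrable_prod_apply (integrable_rMajorantFactor hν₀ ha j)).const_mul
    (8 * ν₁ * (2 * π) ^ (-(3:ℝ)/2))).mono' ?_ (.of_forall fun v => ?_)
  · exact Measurable.aestronglyMeasurable (by unfold rIntegrand Mx; fun_prop)
  · rw [norm_of_nonneg (rIntegrand_nonneg hν_nonneg a j v)]
    exact rIntegrand_le_majorant hν hν₀ a j v

theorem integral_rIntegrand_le (hmeas : Measurable ν)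
    (hν : ∀ v, ν₀ * (1 + ‖v‖) ≤ ν v ∧ ν v ≤ ν₁ * (1 + ‖v‖)) (hν₀ : 0 < ν₀)
    {a : ℝ} (ha : 0 < a) (j : ℝ) :
    ∫ v, rIntegrand ν a j v ≤ 32 * ν₁ * (2 * π) ^ (-(3:ℝ)/2) * π ^ 2 / ν₀ / a := by
  calc ∫ v, rIntegrand ν a j v
      ≤ ∫ v : EuclideanSpace ℝ (Fin 3),
          8 * ν₁ * (2 * π) ^ (-(3:ℝ)/2) * ∏ i, rMajorantFactor ν₀ a j i (v i) :=
        integral_mono (integrable_rIntegrand hmeas hν hν₀ ha j)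
          ((EuclideanSpace.integrable_prod_apply (integrable_rMajorantFactor hν₀ ha j)).const_mul _)
          (rIntegrand_le_majorant hν hν₀ a j)
    _ = 32 * ν₁ * (2 * π) ^ (-(3:ℝ)/2) * π ^ 2 / ν₀ / a := by
        rw [integral_const_mul, integral_rMajorant hν₀ ha]
        field_simp
        ring

theorem rIntegrand_ge_of_mem_box
    (hν : ∀ v, ν₀ * (1 + ‖v‖) ≤ ν v ∧ ν v ≤ ν₁ * (1 + ‖v‖)) (hν₀ : 0 ≤ ν₀)
    {a j : ℝ} (ha : 2 ≤ a) (hj : |j| ≤ 1)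
    {v : EuclideanSpace ℝ (Fin 3)} (hv0 : v 0 ∈ Set.Ioc (-j) (-j + a⁻¹))
    (hv1 : v 1 ∈ Set.Ioc 1 2) (hv2 : v 2 ∈ Set.Ioc 0 1) :
    ν₀ * (2 * π) ^ (-(3:ℝ)/2) * exp (-9 / 2) / (16 * ν₁ ^ 2 + 1) ≤ rIntegrand ν a j v := by
  obtain ⟨hlow, hup⟩ := hν v
  have hnorm := EuclideanSpace.norm_sq_fin_three v
  have hainv : a⁻¹ ≤ 1 / 2 := by rw [one_div]; exact inv_anti₀ two_pos ha
  have hj' := abs_le.mp hj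
  have hnorm_le : ‖v‖ ≤ 3 := by
    nlinarith [hv0.1, hv0.2, hv1.1, hv1.2, hv2.1, hv2.2, norm_nonneg v]
  have hshift_pos : 0 < v 0 + j := by linarith [hv0.1]
  have hshift : a * (v 0 + j) ≤ 1 := by
    calc a * (v 0 + j) ≤ a * a⁻¹ := by gcongr; linarith [hv0.2]
      _ = 1 := mul_inv_cancel₀ (by linarith)
  have hν₁ : 0 ≤ ν₁ := by nlinarith [norm_nonneg v]
  have hν_le : ν v ≤ 4 * ν₁ := by nlinarith [mul_le_mul_of_nonneg_left hnorm_le hν₁]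
  have hν₀_le : ν₀ ≤ ν v := by nlinarith [norm_nonneg v]
  have hν_nonneg : 0 ≤ ν v := hν₀.trans hν₀_le
  have hMx : (2 * π) ^ (-(3:ℝ)/2) * exp (-9 / 2) ≤ Mx v := by
    unfold Mx
    gcongr
    nlinarith [norm_nonneg v]
  have hnum : ν₀ * ((2 * π) ^ (-(3:ℝ)/2) * exp (-9 / 2)) ≤ ν v * v 1 ^ 2 * Mx v := by
    have hv1_sq : 1 ≤ v 1 ^ 2 := by nlinarith [hv1.1]
    calc ν₀ * ((2 * π) ^ (-(3:ℝ)/2) * exp (-9 / 2))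
        = ν₀ * 1 * ((2 * π) ^ (-(3:ℝ)/2) * exp (-9 / 2)) := by ring
      _ ≤ ν v * v 1 ^ 2 * Mx v := by gcongr
  have hden : ν v ^ 2 + a ^ 2 * (v 0 + j) ^ 2 ≤ 16 * ν₁ ^ 2 + 1 := by
    nlinarith [mul_nonneg (by linarith : (0:ℝ) ≤ a) hshift_pos.le]
  unfold rIntegrand
  rw [mul_assoc ν₀]
  exact div_le_div₀ (le_trans (by positivity) hnum) hnum (by positivity) hden

theorem le_integral_rIntegrand
    (hν : ∀ v, ν₀ * (1 + ‖v‖) ≤ ν v ∧ ν v ≤ ν₁ * (1 + ‖v‖)) (hν₀ : 0 ≤ ν₀)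
    {a j : ℝ} (ha : 2 ≤ a) (hj : |j| ≤ 1) (hint : Integrable (rIntegrand ν a j)) :
    ν₀ * (2 * π) ^ (-(3:ℝ)/2) * exp (-9 / 2) / (16 * ν₁ ^ 2 + 1) / a ≤
      ∫ v, rIntegrand ν a j v := by
  set c := ν₀ * (2 * π) ^ (-(3:ℝ)/2) * exp (-9 / 2) / (16 * ν₁ ^ 2 + 1)
  set S : Fin 3 → Set ℝ := ![Set.Ioc (-j) (-j + a⁻¹), Set.Ioc 1 2, Set.Ioc 0 1]
  set B := {v : EuclideanSpace ℝ (Fin 3) | ∀ i, v i ∈ S i}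
  have hB : MeasurableSet B := by
    simp only [B, Set.ofPred_forall]
    refine MeasurableSet.iInter fun i => measurableSet_preimage (by fun_prop) ?_
    fin_cases i <;> exact measurableSet_Ioc
  have hB_vol : volume B = ENNReal.ofReal a⁻¹ := by
    simp only [B, S, EuclideanSpace.volume_setOf_forall_mem, Fin.prod_univ_three,
      Matrix.cons_val_zero, Matrix.cons_val_one, Matrix.cons_val, volume_Ioc,
      sub_neg_eq_add, neg_add_cancel_comm]
    norm_num
  have hν_nonneg (v : EuclideanSpace ℝ (Fin 3)) : 0 ≤ ν v := by
    nlinarith [(hν v).1, norm_nonneg v]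
  calc c / a = c * volume.real B := by
        rw [measureReal_def, hB_vol, ENNReal.toReal_ofReal (by positivity), div_eq_mul_inv]
    _ ≤ ∫ v in B, rIntegrand ν a j v :=
        setIntegral_ge_of_const_le_real hB (by simp [hB_vol])
          (fun v hv => rIntegrand_ge_of_mem_box hν hν₀ ha hj (hv 0) (hv 1) (hv 2))
          hint.integrableOn
    _ ≤ ∫ v, rIntegrand ν a j v :=
        setIntegral_le_integral hint (.of_forall (rIntegrand_nonneg hν_nonneg a j))

end Bounds

theorem stmt9 (ν₀ ν₁ : ℝ) (hν₀ : 0 < ν₀) (hν₁ : 0 < ν₁) :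
    ∃ C₁ > (0:ℝ), ∃ C₂ > (0:ℝ),
      ∀ ν : EuclideanSpace ℝ (Fin 3) → ℝ, Measurable ν →
        (∀ v, ν₀ * (1 + ‖v‖) ≤ ν v ∧ ν v ≤ ν₁ * (1 + ‖v‖)) →
        ∀ j : ℝ, (j = -1 ∨ j = 1) →
        ∀ ε ∈ Set.Ioo (0:ℝ) 1, ∀ s : ℝ, 0 < s → 2 ≤ ε * s →
          C₁ / s ≤ Rquant ν ε s j ∧ Rquant ν ε s j ≤ C₂ / s := by
  set c₁ := ν₀ * (2 * π) ^ (-(3:ℝ)/2) * exp (-9 / 2) / (16 * ν₁ ^ 2 + 1)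
  set c₂ := 32 * ν₁ * (2 * π) ^ (-(3:ℝ)/2) * π ^ 2 / ν₀
  refine ⟨c₁ / 2, by positivity, c₂ / 2, by positivity, ?_⟩
  intro ν hmeas hν j hj ε hε s hs has
  have hε₀ : 0 < ε := hε.1
  have hj' : |j| ≤ 1 := by rcases hj with rfl | rfl <;> norm_num
  have hint := integrable_rIntegrand hmeas hν hν₀ (by positivity : 0 < ε * s) j
  rw [Rquant_eq_integral_rIntegrand]
  constructor
  · calc c₁ / 2 / s = ε / 2 * (c₁ / (ε * s)) := by field_simp
      _ ≤ _ := by gcongr; exact le_integral_rIntegrand hν hν₀.le has hj' hint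
  · calc _ ≤ ε / 2 * (c₂ / (ε * s)) := by
          gcongr; exact integral_rIntegrand_le hmeas hν hν₀ (by positivity) j
      _ = c₂ / 2 / s := by field_simp

end
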